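/- Let (f_1,...,f_m) be a sequence of not necessarily homogeneous polynomials of positive degrees in R = K[x_1,...,x_n], let F^top = (f_1^top,...,f_m^top) be the sequence of top-degree parts, and let F^h ⊂ R' = R[y] be the set of homogenizations. Assume F^top is cryptographic semi-regular and let D = d_reg(⟨F^top⟩). Then for every d < D, dim_K (R'/⟨F^h⟩)_d = dim_K (R/⟨F^top⟩)_d + dim_K (R'/⟨F^h⟩)_{d-1}, and consequently dim_K (R'/⟨F^h⟩)_d = Σ_{i=0}^d dim_K (R/⟨F^top⟩)_i. -/

import Mathlib

open MvPolynomial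

namespace GBPaper

/-- The dimension of the degree-`d` homogeneous piece of `R/I`,
where `R = K[x_i : i ∈ σ]`. -/
noncomputable def hilbertFn (K : Type*) [Field K] {σ : Type*}
    (I : Ideal (MvPolynomial σ K)) (d : ℕ) : ℕ :=
  Module.finrank K
    ((MvPolynomial.homogeneousSubmodule σ K d).map
      (Ideal.Quotient.mkₐ K I).toLinearMap)

/-- An ideal is homogeneous iff it contains all homogeneous components of its elements. -/
def IsHomogeneousIdeal {K : Type*} [Field K] {σ : Type*}
    (I : Ideal (MvPolynomial σ K)) : Prop :=
  ∀ f ∈ I, ∀ d : ℕ, MvPolynomial.homogeneousComponent d f ∈ I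

/-- The degree of regularity: the least `d` with `R_d = I_d`. -/
noncomputable def degReg (K : Type*) [Field K] {σ : Type*}
    (I : Ideal (MvPolynomial σ K)) : ℕ :=
  sInf {d : ℕ | ∀ f : MvPolynomial σ K, f.IsHomogeneous d → f ∈ I}

/-- The generalized degree of regularity: the least `d₀` from which on the Hilbert
function of `R/I` is constant. -/
noncomputable def gdegReg (K : Type*) [Field K] {σ : Type*}
    (I : Ideal (MvPolynomial σ K)) : ℕ :=
  sInf {d₀ : ℕ | ∀ d : ℕ, d₀ ≤ d → hilbertFn K I d = hilbertFn K I d₀}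

/-- The leading monomial (leading exponent) of a polynomial with respect to a
monomial order. -/
noncomputable def lm {K : Type*} [Field K] {σ : Type*} (m : MonomialOrder σ)
    (f : MvPolynomial σ K) : σ →₀ ℕ :=
  m.toSyn.symm (f.support.sup fun s => m.toSyn s)

/-- A monomial order is graded (degree-compatible) if it refines total degree. -/
def MonIsGraded {σ : Type*} (m : MonomialOrder σ) : Prop :=
  ∀ a b : σ →₀ ℕ, a.degree < b.degree → m.toSyn a < m.toSyn b

/-- `G` is the reduced Gröbner basis of `I` with respect to the monomial order `m`. -/
structure IsReducedGB {K : Type*} [Field K] {σ : Type*} (m : MonomialOrder σ)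
    (I : Ideal (MvPolynomial σ K)) (G : Finset (MvPolynomial σ K)) : Prop where
  subset : (G : Set (MvPolynomial σ K)) ⊆ I
  zero_not_mem : (0 : MvPolynomial σ K) ∉ G
  monic : ∀ g ∈ G, MvPolynomial.coeff (lm m g) g = 1
  isGB : ∀ f ∈ I, f ≠ 0 → ∃ g ∈ G, lm m g ≤ lm m f
  reduced : ∀ g ∈ G, ∀ g' ∈ G, g ≠ g' → ∀ s ∈ g.support, ¬ lm m g' ≤ s

/-- The degree reverse lexicographic order with `x_0 ≻ x_1 ≻ ⋯`. -/
def IsDegRevLex {n : ℕ} (m : MonomialOrder (Fin n)) : Prop :=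
  ∀ a b : Fin n →₀ ℕ, m.toSyn a < m.toSyn b ↔
    (a.degree < b.degree ∨
      (a.degree = b.degree ∧ ∃ i, b i < a i ∧ ∀ j, i < j → a j = b j))

/-- Restriction of an exponent vector on `n+1` variables to the first `n` variables. -/
noncomputable def restr {n : ℕ} (a : Fin (n + 1) →₀ ℕ) : Fin n →₀ ℕ :=
  Finsupp.equivFunOnFinite.symm fun i => a i.castSucc

/-- Extension of an exponent vector on `n` variables to `n+1` variables (with
`y`-exponent `0`). -/
noncomputable def extX {n : ℕ} (a : Fin n →₀ ℕ) : Fin (n + 1) →₀ ℕ :=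
  Finsupp.embDomain Fin.castSuccEmb a

/-- `m'` is the homogenization (w.r.t. the last variable `y`) of the graded
monomial order `m₀`: it compares first total degrees, then the `X`-parts using `m₀`. -/
def IsHomogenizationOrder {n : ℕ} (m' : MonomialOrder (Fin (n + 1)))
    (m₀ : MonomialOrder (Fin n)) : Prop :=
  ∀ a b : Fin (n + 1) →₀ ℕ, m'.toSyn a < m'.toSyn b ↔
    (a.degree < b.degree ∨
      (a.degree = b.degree ∧ m₀.toSyn (restr a) < m₀.toSyn (restr b)))

/-- The top part (maximal total degree part) of a polynomial. -/
noncomputable def topPart {K : Type*} [Field K] {σ : Type*}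
    (f : MvPolynomial σ K) : MvPolynomial σ K :=
  MvPolynomial.homogeneousComponent f.totalDegree f

/-- The homogenization of `f ∈ K[x_1,…,x_n]` by the extra (last) variable `y`. -/
noncomputable def homog {K : Type*} [Field K] {n : ℕ}
    (f : MvPolynomial (Fin n) K) : MvPolynomial (Fin (n + 1)) K :=
  ∑ s ∈ f.support,
    MvPolynomial.monomial
      (extX s + Finsupp.single (Fin.last n) (f.totalDegree - s.degree))
      (f.coeff s)

/-- The last variable `y` used for homogenization. -/
noncomputable def yvar (K : Type*) [Field K] (n : ℕ) : MvPolynomial (Fin (n + 1)) K :=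
  MvPolynomial.X (Fin.last n)

/-- Substituting `y = 0`, the "top part" of a homogeneous polynomial in `R[y]`. -/
noncomputable def setYZero {K : Type*} [Field K] {n : ℕ}
    (g : MvPolynomial (Fin (n + 1)) K) : MvPolynomial (Fin (n + 1)) K :=
  MvPolynomial.aeval
    (fun i => if i = Fin.last n then 0 else MvPolynomial.X i) g

/-- The ideal generated by the polynomials `f j` for `j < i`. -/
noncomputable def prevIdeal {K : Type*} [Field K] {σ : Type*} {M : ℕ}
    (f : Fin M → MvPolynomial σ K) (i : Fin M) : Ideal (MvPolynomial σ K) :=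
  Ideal.span (f '' {j | j < i})

/-- `d`-regularity of a sequence of homogeneous polynomials of degrees `dg`. -/
def IsDRegularSeq {K : Type*} [Field K] {σ : Type*} {M : ℕ}
    (f : Fin M → MvPolynomial σ K) (dg : Fin M → ℕ) (d : ℕ) : Prop :=
  ∀ i : Fin M, ∀ g : MvPolynomial σ K, ∀ e : ℕ,
    g.IsHomogeneous e → e + dg i < d →
    g * f i ∈ prevIdeal f i → g ∈ prevIdeal f i

/-- Semi-regularity (Pardue): each multiplication map on graded pieces of the
successive quotients is injective or surjective. -/
def IsSemiRegularSeq {K : Type*} [Field K] {σ : Type*} {M : ℕ}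
    (f : Fin M → MvPolynomial σ K) (dg : Fin M → ℕ) : Prop :=
  ∀ i : Fin M, ∀ t : ℕ, dg i ≤ t →
    (∀ g : MvPolynomial σ K, g.IsHomogeneous (t - dg i) →
        g * f i ∈ prevIdeal f i → g ∈ prevIdeal f i) ∨
    (∀ h : MvPolynomial σ K, h.IsHomogeneous t →
        ∃ g : MvPolynomial σ K, g.IsHomogeneous (t - dg i) ∧
          h - g * f i ∈ prevIdeal f i)

/-- The power series `∏ (1 - z^{d_i}) / (1-z)^n` over `ℤ`. -/
noncomputable def semiRegSeries (n : ℕ) {M : ℕ} (dg : Fin M → ℕ) : PowerSeries ℤ :=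
  (∏ i : Fin M, (1 - (PowerSeries.X : PowerSeries ℤ) ^ dg i)) *
    ((PowerSeries.invOneSubPow ℤ n : (PowerSeries ℤ)ˣ) : PowerSeries ℤ)

/-- The cutoff of the truncation `[·]`: the first index with a nonpositive coefficient. -/
noncomputable def truncCutoff (P : PowerSeries ℤ) : ℕ :=
  sInf {t : ℕ | PowerSeries.coeff (R := ℤ) t P ≤ 0}

/-- The coefficient of `z^t` in the series `[P]` obtained by truncating `P` after
the last consecutive positive coefficient. -/
noncomputable def truncCoeff (P : PowerSeries ℤ) (t : ℕ) : ℤ :=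
  if t < truncCutoff P then PowerSeries.coeff (R := ℤ) t P else 0

section Koszul

variable {K : Type*} [Field K] {σ : Type*} {M : ℕ}

/-- Index set of the degree-`i` part of the Koszul complex on `M` polynomials. -/
abbrev KIdx (M i : ℕ) := {s : Finset (Fin M) // s.card = i}

/-- The Koszul differential `K_{i+1} → K_i` of the Koszul complex on `f`. -/
noncomputable def koszulD (f : Fin M → MvPolynomial σ K) (i : ℕ)
    (v : KIdx M (i + 1) → MvPolynomial σ K) :
    KIdx M i → MvPolynomial σ K :=
  fun t => ∑ j : Fin M,
    if h : j ∈ t.val then 0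
    else ((-1 : MvPolynomial σ K) ^ (t.val.filter (fun l => l < j)).card) * f j *
      v ⟨insert j t.val, by rw [Finset.card_insert_of_notMem h, t.prop]⟩

/-- A Koszul `i`-chain is homogeneous of (internal) degree `d`: each component at a
subset `s` is homogeneous of degree `d - ∑_{j ∈ s} dg j` (and zero if `d` is smaller
than this shift). -/
def KChainHom (dg : Fin M → ℕ) (i : ℕ)
    (v : KIdx M i → MvPolynomial σ K) (d : ℕ) : Prop :=
  ∀ t : KIdx M i,
    (v t).IsHomogeneous (d - ∑ j ∈ t.val, dg j) ∧
    (d < ∑ j ∈ t.val, dg j → v t = 0)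

/-- A Koszul `i`-cycle: an `i`-chain killed by the Koszul differential
(every `0`-chain is a cycle). -/
def IsKCycle (f : Fin M → MvPolynomial σ K) :
    (i : ℕ) → (KIdx M i → MvPolynomial σ K) → Prop
  | 0, _ => True
  | (i + 1), v => koszulD f i v = 0

/-- The degree-`d` part of the `i`-th Koszul homology of `f` vanishes:
every homogeneous cycle of degree `d` is a boundary. -/
def KoszulHVanish (f : Fin M → MvPolynomial σ K) (dg : Fin M → ℕ)
    (i d : ℕ) : Prop :=
  ∀ v : KIdx M i → MvPolynomial σ K, KChainHom dg i v d → IsKCycle f i v →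
    ∃ w : KIdx M (i + 1) → MvPolynomial σ K, koszulD f i w = v

/-- The sum `∑ v_j f_j` of which syzygies are the kernel. -/
noncomputable def syzSum (f v : Fin M → MvPolynomial σ K) : MvPolynomial σ K :=
  ∑ j : Fin M, v j * f j

/-- The module of trivial (Koszul) syzygies of `f`. -/
noncomputable def trivSyz (f : Fin M → MvPolynomial σ K) :
    Submodule (MvPolynomial σ K) (Fin M → MvPolynomial σ K) :=
  Submodule.span (MvPolynomial σ K)
    {w | ∃ i j : Fin M, i < j ∧ w = Pi.single j (f i) - Pi.single i (f j)}

/-- A tuple `v` is homogeneous of degree `e` as an element of `⊕ R(-dg j)`. -/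
def TupleHom (dg : Fin M → ℕ) (v : Fin M → MvPolynomial σ K) (e : ℕ) : Prop :=
  ∀ j : Fin M, (v j).IsHomogeneous (e - dg j) ∧ (e < dg j → v j = 0)

end Koszul

end GBPaper

namespace GBPaper

/-- The top part `h|_{y=0}` of a homogeneous polynomial in `R' = R[y]`,
viewed as an element of `R = K[x_1,…,x_n]`. -/
noncomputable def topPartR {K : Type*} [Field K] {n : ℕ}
    (g : MvPolynomial (Fin (n + 1)) K) : MvPolynomial (Fin n) K :=
  MvPolynomial.aeval (Fin.lastCases 0 fun i => MvPolynomial.X i) g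

end GBPaper

open GBPaper

/-!
Write `J = ⟨F^h⟩ ⊆ R' = R[y]` and `I = ⟨F^top⟩ ⊆ R`. Setting `y = 0` maps `R'` onto `R` with
kernel `(y)` and sends `J` onto `I`, so `(R'/(J + (y)))_d ≅ (R/I)_d`. Since `J` is
homogeneous, `(J + (y))_d = J_d + y R'_{d-1}`, and the recurrence follows by counting
dimensions once multiplication by `y` is injective on `(R'/J)_{d-1}`.

For that, let `y g = ∑ a_i f_i^h` with `g` of degree `d - 1` and `d < D`. Setting `y = 0` turns
`(a_i)` into a syzygy of `F^top` of degree `d`, which is a Koszul syzygy because `F^top` is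
`D`-regular. Koszul syzygies of `F^top` lift to Koszul syzygies of `F^h`, so `(a_i)` agrees with
a syzygy of `F^h` modulo `y`, and cancelling `y` gives `g ∈ J`.
-/

namespace MvPolynomial

variable {σ R : Type*}

section CommSemiring

variable [CommSemiring R]

theorem degree_le_totalDegree {f : MvPolynomial σ R} {s : σ →₀ ℕ} (hs : s ∈ f.support) :
    s.degree ≤ f.totalDegree :=
  le_totalDegree hs

attribute [local instance] gradedAlgebra in
theorem homogeneousComponent_mul_of_isHomogeneous {F : MvPolynomial σ R} {k : ℕ}
    (hF : F.IsHomogeneous k) (r : MvPolynomial σ R) (e : ℕ) :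
    homogeneousComponent e (r * F) =
      if k ≤ e then homogeneousComponent (e - k) r * F else 0 := by
  have h := DirectSum.coe_decompose_mul_of_right_mem (homogeneousSubmodule σ R) e (a := r) hF
  rwa [← DirectSum.Decomposition.decompose'_eq, decomposition.decompose'_apply,
    decomposition.decompose'_apply] at h

theorem exists_isHomogeneous_coeffs_of_mem_span_image {ι : Type*} [Fintype ι]
    {G : ι → MvPolynomial σ R} {e : ι → ℕ} (hG : ∀ i, (G i).IsHomogeneous (e i))
    {s : Set ι} {g : MvPolynomial σ R} (hg : g ∈ Ideal.span (G '' s)) (d : ℕ) :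
    ∃ a : ι → MvPolynomial σ R,
      (∀ i, (a i).IsHomogeneous (d - e i) ∧ (d < e i → a i = 0)) ∧
        (∀ i ∉ s, a i = 0) ∧ homogeneousComponent d g = ∑ i, a i * G i := by
  classical
  obtain ⟨l, hls, rfl⟩ := (Finsupp.mem_span_image_iff_linearCombination _).1 hg
  refine ⟨fun i => if e i ≤ d then homogeneousComponent (d - e i) (l i) else 0,
    fun i => ⟨?_, fun hi => if_neg (by omega)⟩, fun i hi => ?_, ?_⟩
  · dsimp only
    split_ifs
    · exact homogeneousComponent_isHomogeneous _ _
    · exact isHomogeneous_zero _ _ _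
  · simp [Finsupp.notMem_support_iff.1 fun h => hi (hls h)]
  · rw [Finsupp.linearCombination_apply, Finsupp.sum_fintype _ _ (by simp), map_sum]
    refine Finset.sum_congr rfl fun i _ => ?_
    rw [smul_eq_mul, homogeneousComponent_mul_of_isHomogeneous (hG i), ite_mul, zero_mul]

end CommSemiring

section SubstLastZero

variable [CommRing R] {n : ℕ}

variable (R n) in
noncomputable def substLastZero : MvPolynomial (Fin (n + 1)) R →ₐ[R] MvPolynomial (Fin n) R :=
  aeval (Fin.lastCases 0 X)

theorem substLastZero_rename_castSucc (p : MvPolynomial (Fin n) R) :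
    substLastZero R n (rename Fin.castSucc p) = p := by
  rw [substLastZero, aeval_rename]
  conv_rhs => rw [← aeval_X_left_apply p]
  congr 2
  funext i
  simp

theorem substLastZero_surjective : Function.Surjective (substLastZero R n) := fun p =>
  ⟨_, substLastZero_rename_castSucc p⟩

theorem substLastZero_X_last : substLastZero R n (X (Fin.last n)) = 0 := by
  rw [substLastZero, aeval_X, Fin.lastCases_last]

theorem sub_rename_substLastZero_mem_span (g : MvPolynomial (Fin (n + 1)) R) :
    g - rename Fin.castSucc (substLastZero R n g) ∈ Ideal.span {X (Fin.last n)} := by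
  induction g using MvPolynomial.induction_on with
  | C a => simp [substLastZero]
  | add p q hp hq =>
    rw [map_add, map_add, add_sub_add_comm]
    exact add_mem hp hq
  | mul_X p i hp =>
    induction i using Fin.lastCases with
    | last =>
      rw [map_mul, substLastZero_X_last, mul_zero, map_zero, sub_zero]
      exact Ideal.mem_span_singleton.2 (dvd_mul_left _ _)
    | cast j =>
      have hj : substLastZero R n (X j.castSucc) = X j := by
        rw [substLastZero, aeval_X, Fin.lastCases_castSucc]
      rw [map_mul, hj, map_mul, rename_X, ← sub_mul]
      exact Ideal.mul_mem_right _ _ hp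

theorem ker_substLastZero :
    RingHom.ker (substLastZero R n) = Ideal.span {X (Fin.last n)} := by
  refine le_antisymm (fun g hg => ?_) ?_
  · simpa [RingHom.mem_ker.1 hg] using sub_rename_substLastZero_mem_span g
  · rw [Ideal.span_le, Set.singleton_subset_iff]
    exact substLastZero_X_last

theorem IsHomogeneous.substLastZero {g : MvPolynomial (Fin (n + 1)) R} {d : ℕ}
    (hg : g.IsHomogeneous d) : (substLastZero R n g).IsHomogeneous d := by
  have h := hg.aeval (n := 1) (Fin.lastCases (0 : MvPolynomial (Fin n) R) X) fun i => by
    induction i using Fin.lastCases with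
    | last => simpa using isHomogeneous_zero _ _ 1
    | cast j => simpa using isHomogeneous_X R j
  rwa [one_mul] at h

theorem map_substLastZero_homogeneousSubmodule (d : ℕ) :
    (homogeneousSubmodule (Fin (n + 1)) R d).map (substLastZero R n).toLinearMap =
      homogeneousSubmodule (Fin n) R d := by
  refine le_antisymm ?_ fun p hp => ⟨rename Fin.castSucc p, ?_, substLastZero_rename_castSucc p⟩
  · rintro _ ⟨g, hg, rfl⟩
    exact IsHomogeneous.substLastZero hg
  · exact IsHomogeneous.rename_isHomogeneous hp

end SubstLastZero

end MvPolynomial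

namespace GBPaper

open MvPolynomial Module

section Syzygies

variable {K : Type*} [Field K] {σ : Type*} {M : ℕ}

theorem syzSum_eq_linearCombination (f v : Fin M → MvPolynomial σ K) :
    syzSum f v = Fintype.linearCombination (MvPolynomial σ K) f v := by
  simp [syzSum, Fintype.linearCombination_apply]

theorem syzSum_sub (f v w : Fin M → MvPolynomial σ K) :
    syzSum f (v - w) = syzSum f v - syzSum f w := by
  simp [syzSum, sub_mul]

theorem trivSyz_le_ker_syzSum (f : Fin M → MvPolynomial σ K) :
    trivSyz f ≤ LinearMap.ker (Fintype.linearCombination (MvPolynomial σ K) f) := by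
  refine Submodule.span_le.2 ?_
  rintro _ ⟨i, j, hij, rfl⟩
  simp [Fintype.linearCombination_apply, Pi.single_apply, mul_sub, Finset.sum_sub_distrib,
    mul_comm]

theorem syzSum_eq_zero_of_mem_trivSyz {f v : Fin M → MvPolynomial σ K} (hv : v ∈ trivSyz f) :
    syzSum f v = 0 := by
  rw [syzSum_eq_linearCombination]
  exact trivSyz_le_ker_syzSum f hv

theorem TupleHom.add {dg : Fin M → ℕ} {v w : Fin M → MvPolynomial σ K} {e : ℕ}
    (hv : TupleHom dg v e) (hw : TupleHom dg w e) : TupleHom dg (v + w) e := fun j =>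
  ⟨(hv j).1.add (hw j).1, fun h => by simp [(hv j).2 h, (hw j).2 h]⟩

theorem TupleHom.update_zero {dg : Fin M → ℕ} {v : Fin M → MvPolynomial σ K} {e : ℕ}
    (hv : TupleHom dg v e) (m : Fin M) : TupleHom dg (Function.update v m 0) e := by
  intro j
  rcases eq_or_ne j m with rfl | hj
  · simpa using isHomogeneous_zero _ _ _
  · simpa [hj] using hv j

theorem TupleHom.mul_right {dg : Fin M → ℕ} {v : Fin M → MvPolynomial σ K} {e k : ℕ}
    (hv : TupleHom dg v e) {F : MvPolynomial σ K} (hF : F.IsHomogeneous k) :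
    TupleHom dg (fun j => v j * F) (e + k) := by
  intro j
  by_cases hj : e < dg j
  · simp [(hv j).2 hj, isHomogeneous_zero]
  · refine ⟨?_, fun h => absurd h (by omega)⟩
    simpa [show e - dg j + k = e + k - dg j by omega] using (hv j).1.mul hF

theorem mul_mem_prevIdeal_of_syzSum_eq_zero {f c : Fin M → MvPolynomial σ K} {m : Fin M}
    (hc : ∀ i, m < i → c i = 0) (hs : syzSum f c = 0) : c m * f m ∈ prevIdeal f m := by
  rw [syzSum, ← Finset.add_sum_erase _ _ (Finset.mem_univ m), add_eq_zero_iff_eq_neg] at hs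
  rw [hs]
  refine neg_mem (Submodule.sum_mem _ fun i hi => ?_)
  rcases lt_or_gt_of_ne (Finset.ne_of_mem_erase hi) with h | h
  · exact Ideal.mul_mem_left _ _ (Ideal.subset_span ⟨i, h, rfl⟩)
  · simp [hc i h]

variable {F : Fin M → MvPolynomial σ K} {dg : Fin M → ℕ} {D : ℕ}

/- Regularity puts the last nonzero entry `c m` into `⟨F j | j < m⟩`; subtracting the
corresponding Koszul syzygies clears it. -/
theorem exists_sub_mem_trivSyz_of_syzSum_eq_zero (hF : ∀ i, (F i).IsHomogeneous (dg i))
    (hreg : IsDRegularSeq F dg D) {t : ℕ} (ht : t < D) {c : Fin M → MvPolynomial σ K}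
    (hc : TupleHom dg c t) (hs : syzSum F c = 0) {m : Fin M} (hcm : ∀ i, m < i → c i = 0) :
    ∃ c', c - c' ∈ trivSyz F ∧ TupleHom dg c' t ∧ ∀ i, m ≤ i → c' i = 0 := by
  by_cases hm0 : c m = 0
  · refine ⟨c, by simp, hc, fun i hi => ?_⟩
    rcases hi.eq_or_lt with rfl | hi
    exacts [hm0, hcm i hi]
  have hdm : dg m ≤ t := by
    by_contra h
    exact hm0 ((hc m).2 (by omega))
  have hprev : c m ∈ prevIdeal F m := hreg m (c m) (t - dg m) (hc m).1 (by omega)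
    (mul_mem_prevIdeal_of_syzSum_eq_zero hcm hs)
  obtain ⟨r, hr, hrm, hsum⟩ := exists_isHomogeneous_coeffs_of_mem_span_image hF hprev (t - dg m)
  rw [homogeneousComponent_eq_self (hc m).1] at hsum
  have hr : TupleHom dg r (t - dg m) := hr
  have hrm' : r m = 0 := hrm m (lt_irrefl m)
  refine ⟨Function.update c m 0 + fun i => r i * F m, ?_, ?_, fun i hi => ?_⟩
  · have hdiff : c - (Function.update c m 0 + fun i => r i * F m) =
        ∑ j, r j • (Pi.single m (F j) - Pi.single j (F m)) := by
      funext i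
      rcases eq_or_ne i m with rfl | hi
      · simp [hsum, hrm', Pi.single_apply, mul_sub, Finset.sum_sub_distrib]
      · simp [hi, Pi.single_apply]
    rw [hdiff]
    refine Submodule.sum_mem _ fun j _ => ?_
    by_cases hj : j < m
    · exact Submodule.smul_mem _ _ (Submodule.subset_span ⟨j, m, hj, rfl⟩)
    · simp [hrm j hj]
  · have hrF := hr.mul_right (hF m)
    rw [Nat.sub_add_cancel hdm] at hrF
    exact (hc.update_zero m).add hrF
  · rcases hi.eq_or_lt with rfl | hi
    · simp [hrm']
    · simp [hi.ne', hcm i hi, hrm i (not_lt.2 hi.le)]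

theorem mem_trivSyz_of_syzSum_eq_zero (hF : ∀ i, (F i).IsHomogeneous (dg i))
    (hreg : IsDRegularSeq F dg D) {t : ℕ} (ht : t < D) {c : Fin M → MvPolynomial σ K}
    (hc : TupleHom dg c t) (hs : syzSum F c = 0) : c ∈ trivSyz F := by
  suffices ∀ k, ∀ c : Fin M → MvPolynomial σ K, TupleHom dg c t → syzSum F c = 0 →
      (∀ i : Fin M, k ≤ (i : ℕ) → c i = 0) → c ∈ trivSyz F from
    this M c hc hs fun i hi => absurd i.isLt (by omega)
  intro k
  induction k with
  | zero =>
    intro c _ _ hc0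
    rw [show c = 0 from funext fun i => hc0 i (Nat.zero_le _)]
    exact zero_mem _
  | succ k ih =>
    intro c hc hs hck
    by_cases hk : k < M
    · obtain ⟨c', hcc', hc', hc'k⟩ := exists_sub_mem_trivSyz_of_syzSum_eq_zero hF hreg ht hc hs
        (m := ⟨k, hk⟩) fun i hi => hck i hi
      have hs' : syzSum F c' = 0 := by
        rw [show c' = c - (c - c') by abel, syzSum_sub, hs, syzSum_eq_zero_of_mem_trivSyz hcc',
          sub_zero]
      simpa using add_mem hcc' (ih c' hc' hs' fun i hi => hc'k i hi)
    · exact ih c hc hs fun i _ => hck i (by omega)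

theorem exists_mem_trivSyz_map_eq {τ : Type*} (φ : MvPolynomial σ K →+* MvPolynomial τ K)
    (hφ : Function.Surjective φ) (G : Fin M → MvPolynomial σ K) {c : Fin M → MvPolynomial τ K}
    (hc : c ∈ trivSyz fun i => φ (G i)) :
    ∃ w ∈ trivSyz G, (fun i => φ (w i)) = c := by
  induction hc using Submodule.span_induction with
  | mem c hc =>
    obtain ⟨i, j, hij, rfl⟩ := hc
    refine ⟨_, Submodule.subset_span ⟨i, j, hij, rfl⟩, funext fun l => ?_⟩
    simp [Pi.single_apply, apply_ite φ]
  | zero => exact ⟨0, zero_mem _, funext fun _ => map_zero φ⟩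
  | add c c' _ _ h h' =>
    obtain ⟨w, hw, rfl⟩ := h
    obtain ⟨w', hw', rfl⟩ := h'
    exact ⟨w + w', add_mem hw hw', funext fun _ => map_add φ _ _⟩
  | smul a c _ h =>
    obtain ⟨w, hw, rfl⟩ := h
    obtain ⟨a', rfl⟩ := hφ a
    exact ⟨a' • w, Submodule.smul_mem _ _ hw, funext fun _ => map_mul φ _ _⟩

end Syzygies

section Homogenization

variable {K : Type*} [Field K] {n : ℕ}

theorem homog_eq_sum (f : MvPolynomial (Fin n) K) :
    homog f = ∑ s ∈ f.support, rename Fin.castSucc (monomial s (coeff s f)) *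
      X (Fin.last n) ^ (f.totalDegree - s.degree) := by
  refine Finset.sum_congr rfl fun s _ => ?_
  rw [rename_monomial, X_pow_eq_monomial, monomial_mul, mul_one, extX,
    Finsupp.embDomain_eq_mapDomain]
  rfl

theorem homog_isHomogeneous (f : MvPolynomial (Fin n) K) :
    (homog f).IsHomogeneous f.totalDegree := by
  rw [homog_eq_sum]
  refine IsHomogeneous.sum _ _ _ fun s hs => ?_
  have h := ((isHomogeneous_monomial (d := s) (coeff s f) rfl).rename_isHomogeneous
    (f := Fin.castSucc)).mul ((isHomogeneous_X K (Fin.last n)).pow (f.totalDegree - s.degree))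
  rwa [one_mul, Nat.add_sub_cancel' (degree_le_totalDegree hs)] at h

theorem substLastZero_homog (f : MvPolynomial (Fin n) K) :
    substLastZero K n (homog f) = topPart f := by
  rw [topPart, homogeneousComponent_apply, Finset.sum_filter, homog_eq_sum, map_sum]
  refine Finset.sum_congr rfl fun s hs => ?_
  rw [map_mul, map_pow, substLastZero_rename_castSucc, substLastZero_X_last, zero_pow_eq,
    mul_ite, mul_one, mul_zero]
  have hle := degree_le_totalDegree hs
  exact if_congr (by omega) rfl rfl

theorem comap_substLastZero_span_topPart {M : ℕ} (f : Fin M → MvPolynomial (Fin n) K) :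
    (Ideal.span (Set.range fun i => topPart (f i))).comap (substLastZero K n) =
      Ideal.span (Set.range fun i => homog (f i)) ⊔ Ideal.span {X (Fin.last n)} := by
  have hmap : (Ideal.span (Set.range fun i => homog (f i))).map (substLastZero K n) =
      Ideal.span (Set.range fun i => topPart (f i)) := by
    rw [Ideal.map_span, ← Set.range_comp]
    simp only [Function.comp_def, substLastZero_homog]
  rw [← hmap, Ideal.comap_map_of_surjective _ substLastZero_surjective,
    ← RingHom.ker_eq_comap_bot, ker_substLastZero]

end Homogenization

section HilbertFunction

variable {K : Type*} [Field K] {σ : Type*}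

theorem isHomogeneousIdeal_span {ι : Type*} [Fintype ι] {G : ι → MvPolynomial σ K}
    {e : ι → ℕ} (hG : ∀ i, (G i).IsHomogeneous (e i)) :
    IsHomogeneousIdeal (Ideal.span (Set.range G)) := by
  intro g hg d
  rw [← Set.image_univ] at hg
  obtain ⟨a, -, -, hga⟩ := exists_isHomogeneous_coeffs_of_mem_span_image hG hg d
  rw [hga]
  exact Ideal.sum_mem _ fun i _ => Ideal.mul_mem_left _ _ (Ideal.subset_span ⟨i, rfl⟩)

theorem IsHomogeneousIdeal.exists_sub_mul_mem_of_mem_sup {J : Ideal (MvPolynomial σ K)}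
    (hJ : IsHomogeneousIdeal J) {x : MvPolynomial σ K} {k : ℕ} (hx : x.IsHomogeneous k)
    {g : MvPolynomial σ K} {d : ℕ} (hg : g.IsHomogeneous d) (hmem : g ∈ J ⊔ Ideal.span {x}) :
    ∃ h : MvPolynomial σ K,
      h.IsHomogeneous (d - k) ∧ (d < k → h = 0) ∧ g - x * h ∈ J := by
  obtain ⟨j, hj, z, hz, rfl⟩ := Submodule.mem_sup.1 hmem
  obtain ⟨r, rfl⟩ := Ideal.mem_span_singleton'.1 hz
  refine ⟨if k ≤ d then homogeneousComponent (d - k) r else 0, ?_,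
    fun h => if_neg (by omega), ?_⟩
  · split_ifs
    exacts [homogeneousComponent_isHomogeneous _ _, isHomogeneous_zero _ _ _]
  · rw [← homogeneousComponent_eq_self hg, map_add, homogeneousComponent_mul_of_isHomogeneous hx]
    split_ifs <;> simpa [mul_comm] using hJ j hj d

noncomputable def homogeneousPart (I : Ideal (MvPolynomial σ K)) (d : ℕ) :
    Submodule K (MvPolynomial σ K) :=
  homogeneousSubmodule σ K d ⊓ I.restrictScalars K

theorem homogeneousPart_mono {I I' : Ideal (MvPolynomial σ K)} (h : I ≤ I') (d : ℕ) :
    homogeneousPart I d ≤ homogeneousPart I' d :=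
  inf_le_inf_left _ (Submodule.restrictScalars_mono K h)

instance [Finite σ] (d : ℕ) : FiniteDimensional K (homogeneousSubmodule σ K d) :=
  Module.Finite.iff_fg.2 (homogeneousSubmodule_fg σ K d)

instance [Finite σ] (I : Ideal (MvPolynomial σ K)) (d : ℕ) :
    FiniteDimensional K (homogeneousPart I d) :=
  Submodule.finiteDimensional_inf_left _ _

theorem hilbertFn_add_finrank_homogeneousPart [Finite σ] (I : Ideal (MvPolynomial σ K))
    (d : ℕ) :
    hilbertFn K I d + finrank K (homogeneousPart I d) =
      finrank K (homogeneousSubmodule σ K d) := by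
  set p := homogeneousSubmodule σ K d
  have hker : LinearMap.ker (Ideal.Quotient.mkₐ K I).toLinearMap = I.restrictScalars K := by
    ext g
    simp [Ideal.Quotient.eq_zero_iff_mem]
  have h := LinearMap.finrank_range_add_finrank_ker
    ((Ideal.Quotient.mkₐ K I).toLinearMap ∘ₗ p.subtype)
  rw [LinearMap.range_comp, Submodule.range_subtype, LinearMap.ker_comp, hker] at h
  rwa [(Submodule.equivMapOfInjective _ p.injective_subtype
    ((I.restrictScalars K).comap p.subtype)).finrank_eq, Submodule.map_comap_subtype] at h

theorem hilbertFn_comap {τ : Type*} (φ : MvPolynomial σ K →ₐ[K] MvPolynomial τ K)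
    (I : Ideal (MvPolynomial τ K)) {d : ℕ}
    (hφ : (homogeneousSubmodule σ K d).map φ.toLinearMap = homogeneousSubmodule τ K d) :
    hilbertFn K (I.comap φ) d = hilbertFn K I d := by
  set β := Ideal.quotientMapₐ I φ le_rfl
  have hβ : Function.Injective β := Ideal.quotientMap_injective
  rw [hilbertFn, (Submodule.equivMapOfInjective β.toLinearMap hβ _).finrank_eq,
    ← Submodule.map_comp, ← AlgHom.comp_toLinearMap, Ideal.quotient_map_comp_mkₐ,
    AlgHom.comp_toLinearMap, Submodule.map_comp, hφ, hilbertFn]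

variable {J : Ideal (MvPolynomial σ K)} {x : MvPolynomial σ K} {k d : ℕ}

theorem mulLeft_mem_homogeneousSubmodule (hx : x.IsHomogeneous k) (hkd : k ≤ d)
    {h : MvPolynomial σ K} (hh : h ∈ homogeneousSubmodule σ K (d - k)) :
    LinearMap.mulLeft K x h ∈ homogeneousSubmodule σ K d := by
  simpa [Nat.add_sub_cancel' hkd] using hx.mul hh

theorem homogeneousPart_sup_span_singleton (hJ : IsHomogeneousIdeal J)
    (hx : x.IsHomogeneous k) (hkd : k ≤ d) :
    homogeneousPart (J ⊔ Ideal.span {x}) d =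
      homogeneousPart J d ⊔ (homogeneousSubmodule σ K (d - k)).map (LinearMap.mulLeft K x) := by
  refine le_antisymm ?_ (sup_le (homogeneousPart_mono le_sup_left d) ?_)
  · rintro g ⟨hg, hgJ⟩
    obtain ⟨h, hh, -, hgh⟩ := hJ.exists_sub_mul_mem_of_mem_sup hx hg hgJ
    have hxh := mulLeft_mem_homogeneousSubmodule hx hkd hh
    rw [← sub_add_cancel g (x * h)]
    exact Submodule.add_mem_sup ⟨sub_mem hg hxh, hgh⟩ ⟨h, hh, rfl⟩
  · rintro _ ⟨h, hh, rfl⟩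
    exact ⟨mulLeft_mem_homogeneousSubmodule hx hkd hh,
      Ideal.mem_sup_right (Ideal.mul_mem_right _ _ (Ideal.mem_span_singleton_self x))⟩

theorem homogeneousPart_inf_map_mulLeft (hx : x.IsHomogeneous k) (hkd : k ≤ d)
    (hreg : ∀ g : MvPolynomial σ K, g.IsHomogeneous (d - k) → x * g ∈ J → g ∈ J) :
    homogeneousPart J d ⊓ (homogeneousSubmodule σ K (d - k)).map (LinearMap.mulLeft K x) =
      (homogeneousPart J (d - k)).map (LinearMap.mulLeft K x) := by
  refine le_antisymm ?_ ?_
  · rintro _ ⟨⟨-, hxh⟩, ⟨h, hh, rfl⟩⟩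
    exact ⟨h, ⟨hh, hreg h hh hxh⟩, rfl⟩
  · rintro _ ⟨h, ⟨hh, hhJ⟩, rfl⟩
    exact ⟨⟨mulLeft_mem_homogeneousSubmodule hx hkd hh,
      Ideal.mul_mem_left _ _ hhJ⟩, ⟨h, hh, rfl⟩⟩

theorem homogeneousPart_sup_span_singleton_of_lt (hJ : IsHomogeneousIdeal J)
    (hx : x.IsHomogeneous k) (hdk : d < k) :
    homogeneousPart (J ⊔ Ideal.span {x}) d = homogeneousPart J d := by
  refine le_antisymm ?_ (homogeneousPart_mono le_sup_left d)
  rintro g ⟨hg, hgJ⟩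
  refine ⟨hg, ?_⟩
  obtain ⟨h, -, hh0, hgh⟩ := hJ.exists_sub_mul_mem_of_mem_sup hx hg hgJ
  simpa [hh0 hdk] using hgh

variable [Finite σ]

theorem hilbertFn_eq_hilbertFn_sup_add (hJ : IsHomogeneousIdeal J) (hx : x.IsHomogeneous k)
    (hx0 : x ≠ 0) (hkd : k ≤ d)
    (hreg : ∀ g : MvPolynomial σ K, g.IsHomogeneous (d - k) → x * g ∈ J → g ∈ J) :
    hilbertFn K J d = hilbertFn K (J ⊔ Ideal.span {x}) d + hilbertFn K J (d - k) := by
  have hμ : Function.Injective (LinearMap.mulLeft K x) := mul_right_injective₀ hx0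
  have hJd := hilbertFn_add_finrank_homogeneousPart J d
  have hJxd := hilbertFn_add_finrank_homogeneousPart (J ⊔ Ideal.span {x}) d
  have hJdk := hilbertFn_add_finrank_homogeneousPart J (d - k)
  have hdim := Submodule.finrank_sup_add_finrank_inf_eq (homogeneousPart J d)
    ((homogeneousSubmodule σ K (d - k)).map (LinearMap.mulLeft K x))
  rw [← homogeneousPart_sup_span_singleton hJ hx hkd, homogeneousPart_inf_map_mulLeft hx hkd hreg,
    ← (Submodule.equivMapOfInjective _ hμ _).finrank_eq,
    ← (Submodule.equivMapOfInjective _ hμ _).finrank_eq] at hdim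
  omega

theorem hilbertFn_sup_span_singleton_of_lt (hJ : IsHomogeneousIdeal J)
    (hx : x.IsHomogeneous k) (hdk : d < k) :
    hilbertFn K (J ⊔ Ideal.span {x}) d = hilbertFn K J d := by
  have hJd := hilbertFn_add_finrank_homogeneousPart J d
  have hJxd := hilbertFn_add_finrank_homogeneousPart (J ⊔ Ideal.span {x}) d
  rw [homogeneousPart_sup_span_singleton_of_lt hJ hx hdk] at hJxd
  omega

end HilbertFunction

section HomogenizedIdeal

variable {K : Type*} [Field K] {n M : ℕ}

theorem mem_span_homog_of_X_last_mul_mem {f : Fin M → MvPolynomial (Fin n) K}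
    {dg : Fin M → ℕ} {D : ℕ} (hdeg : ∀ i, (f i).totalDegree = dg i)
    (hreg : IsDRegularSeq (fun i => topPart (f i)) dg D) {g : MvPolynomial (Fin (n + 1)) K}
    {e : ℕ} (hg : g.IsHomogeneous e) (he : e + 1 < D)
    (hyg : X (Fin.last n) * g ∈ Ideal.span (Set.range fun i => homog (f i))) :
    g ∈ Ideal.span (Set.range fun i => homog (f i)) := by
  have hfh : ∀ i, (homog (f i)).IsHomogeneous (dg i) := fun i =>
    hdeg i ▸ homog_isHomogeneous (f i)
  have hFh : ∀ i, (topPart (f i)).IsHomogeneous (dg i) := fun i =>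
    hdeg i ▸ homogeneousComponent_isHomogeneous _ _
  rw [← Set.image_univ] at hyg
  obtain ⟨a, ha, -, hsum⟩ := exists_isHomogeneous_coeffs_of_mem_span_image hfh hyg (e + 1)
  rw [homogeneousComponent_eq_self (by simpa [add_comm] using (isHomogeneous_X K _).mul hg)]
    at hsum
  have hc : TupleHom dg (fun i => substLastZero K n (a i)) (e + 1) := fun i =>
    ⟨(ha i).1.substLastZero, fun h => by simp [(ha i).2 h]⟩
  have hs : syzSum (fun i => topPart (f i)) (fun i => substLastZero K n (a i)) = 0 := by
    simpa [syzSum, substLastZero_X_last, substLastZero_homog] using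
      (congrArg (substLastZero K n) hsum).symm
  have htop : (fun i => topPart (f i)) = fun i => substLastZero K n (homog (f i)) :=
    funext fun i => (substLastZero_homog _).symm
  obtain ⟨w, hw, hwa⟩ := exists_mem_trivSyz_map_eq (substLastZero K n).toRingHom
    substLastZero_surjective (fun i => homog (f i))
    (htop ▸ mem_trivSyz_of_syzSum_eq_zero hFh hreg he hc hs)
  have hdvd : ∀ i, X (Fin.last n) ∣ a i - w i := fun i => by
    rw [← Ideal.mem_span_singleton, ← ker_substLastZero, RingHom.mem_ker, map_sub]
    exact sub_eq_zero.2 (congrFun hwa i).symm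
  choose b hb using hdvd
  have hab : syzSum (fun i => homog (f i)) (a - w) =
      X (Fin.last n) * ∑ i, b i * homog (f i) := by
    simp [syzSum, hb, Finset.mul_sum, mul_assoc]
  rw [syzSum_sub, syzSum_eq_zero_of_mem_trivSyz hw, sub_zero, syzSum, ← hsum] at hab
  rw [mul_left_cancel₀ (X_ne_zero _) hab]
  exact Ideal.sum_mem _ fun i _ => Ideal.mul_mem_left _ _ (Ideal.subset_span ⟨i, rfl⟩)

theorem hilbertFn_span_homog_sup_X_last (f : Fin M → MvPolynomial (Fin n) K) (d : ℕ) :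
    hilbertFn K (Ideal.span (Set.range fun i => homog (f i)) ⊔ Ideal.span {X (Fin.last n)}) d =
      hilbertFn K (Ideal.span (Set.range fun i => topPart (f i))) d := by
  rw [← comap_substLastZero_span_topPart]
  exact hilbertFn_comap _ _ (map_substLastZero_homogeneousSubmodule d)

theorem hilbertFn_span_homog_eq_add {f : Fin M → MvPolynomial (Fin n) K} {dg : Fin M → ℕ}
    {D : ℕ} (hdeg : ∀ i, (f i).totalDegree = dg i)
    (hreg : IsDRegularSeq (fun i => topPart (f i)) dg D) {d : ℕ} (hd : 0 < d) (hdD : d < D) :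
    hilbertFn K (Ideal.span (Set.range fun i => homog (f i))) d =
      hilbertFn K (Ideal.span (Set.range fun i => topPart (f i))) d +
        hilbertFn K (Ideal.span (Set.range fun i => homog (f i))) (d - 1) := by
  rw [hilbertFn_eq_hilbertFn_sup_add (isHomogeneousIdeal_span fun i => homog_isHomogeneous (f i))
    (isHomogeneous_X K _) (X_ne_zero _) hd
    fun g hg hyg => mem_span_homog_of_X_last_mul_mem hdeg hreg hg (by omega) hyg,
    hilbertFn_span_homog_sup_X_last]

theorem hilbertFn_span_homog_zero (f : Fin M → MvPolynomial (Fin n) K) :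
    hilbertFn K (Ideal.span (Set.range fun i => homog (f i))) 0 =
      hilbertFn K (Ideal.span (Set.range fun i => topPart (f i))) 0 := by
  rw [← hilbertFn_span_homog_sup_X_last, hilbertFn_sup_span_singleton_of_lt
    (isHomogeneousIdeal_span fun i => homog_isHomogeneous (f i)) (isHomogeneous_X K _) zero_lt_one]

end HomogenizedIdeal

end GBPaper

theorem stmt3_general {K : Type*} [Field K] {n M : ℕ}
    (f : Fin M → MvPolynomial (Fin n) K) (dg : Fin M → ℕ)
    (hdeg : ∀ i, (f i).totalDegree = dg i)
    (hcsr : IsDRegularSeq (fun i => topPart (f i)) dg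
      (degReg K (Ideal.span (Set.range fun i => topPart (f i))))) :
    (∀ d : ℕ, 0 < d →
        d < degReg K (Ideal.span (Set.range fun i => topPart (f i))) →
        hilbertFn K (Ideal.span (Set.range fun i => homog (f i))) d =
          hilbertFn K (Ideal.span (Set.range fun i => topPart (f i))) d +
            hilbertFn K (Ideal.span (Set.range fun i => homog (f i))) (d - 1)) ∧
    (∀ d : ℕ, d < degReg K (Ideal.span (Set.range fun i => topPart (f i))) →
        hilbertFn K (Ideal.span (Set.range fun i => homog (f i))) d =
          ∑ t ∈ Finset.range (d + 1),
            hilbertFn K (Ideal.span (Set.range fun i => topPart (f i))) t) := by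
  refine ⟨fun d hd hdD => hilbertFn_span_homog_eq_add hdeg hcsr hd hdD, fun d => ?_⟩
  induction d with
  | zero => exact fun _ => by rw [Finset.sum_range_one, hilbertFn_span_homog_zero]
  | succ d ih =>
    intro hd
    rw [Finset.sum_range_succ, ← ih (by omega),
      hilbertFn_span_homog_eq_add hdeg hcsr (Nat.succ_pos d) hd, Nat.succ_sub_one, add_comm]

/-- for an affine cryptographic semi-regular sequence, the Hilbert
function of `R'/⟨F^h⟩` satisfies the recurrence
`HF(d) = HF_{R/⟨F^top⟩}(d) + HF(d-1)` for `d < D`, hence equals the partial sums of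
the Hilbert function of `R/⟨F^top⟩`. -/
theorem stmt3 {K : Type*} [Field K] {n M : ℕ}
    (f : Fin M → MvPolynomial (Fin n) K) (dg : Fin M → ℕ)
    (hdeg : ∀ i, (f i).totalDegree = dg i) (hpos : ∀ i, 0 < dg i)
    (hArt : ∃ d : ℕ, ∀ g : MvPolynomial (Fin n) K, g.IsHomogeneous d →
      g ∈ Ideal.span (Set.range fun i => topPart (f i)))
    (hcsr : IsDRegularSeq (fun i => topPart (f i)) dg
      (degReg K (Ideal.span (Set.range fun i => topPart (f i))))) :
    (∀ d : ℕ, 0 < d →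
        d < degReg K (Ideal.span (Set.range fun i => topPart (f i))) →
        hilbertFn K (Ideal.span (Set.range fun i => homog (f i))) d =
          hilbertFn K (Ideal.span (Set.range fun i => topPart (f i))) d +
            hilbertFn K (Ideal.span (Set.range fun i => homog (f i))) (d - 1)) ∧
    (∀ d : ℕ, d < degReg K (Ideal.span (Set.range fun i => topPart (f i))) →
        hilbertFn K (Ideal.span (Set.range fun i => homog (f i))) d =
          ∑ t ∈ Finset.range (d + 1),
            hilbertFn K (Ideal.span (Set.range fun i => topPart (f i))) t) :=
  stmt3_general f dg hdeg hcsr
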